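/- Let K be a commutative field with at least 4 elements and α, β, γ ∈ K, and let C = {(t, α + βt + (γ+1)t²) : t ∈ K} ⊆ K² be the affine part of the curve R_{α,β,γ} in the parameter plane of the Cayley surface. Then exactly one of the following holds: (a) if 1 − 2γ ≠ 0, then C equals the extended circle with radius ρ = γ and midpoint (a₁,a₂) where a₁ = β/(1−2γ) and a₂ = α − (γ−2)β²/(1−2γ)²; (b) if 1 − 2γ = 0 and β ≠ 0, then C is not an extended circle, i.e., there exist no (a₁,a₂) ∈ K² and ρ ∈ K such that C equals the extended circle with midpoint (a₁,a₂) and radius ρ; (c) if 1 − 2γ = 0 and β = 0, then for every point (a₁,a₂) ∈ C, C equals the extended circle with midpoint (a₁,a₂) and radius 1/2 (note 2 is invertible in K in cases (b) and (c)). -/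

import Mathlib

/-- The (non-symmetric) distance function on the affine part of the Cayley
surface, in the parameters `(u₁,u₂)`. -/
def cayleyDist {K : Type*} [Field K] (A B : K × K) : K :=
  (2*A.1^2 - A.2 - A.1*B.1 + B.2 - B.1^2) / (A.1 - B.1)^2

/-- The extended circle with midpoint `A` and radius `ρ`. -/
def extCircle {K : Type*} [Field K] (A : K × K) (ρ : K) : Set (K × K) :=
  insert A {u : K × K | u.1 ≠ A.1 ∧ cayleyDist A u = ρ}

/-- The affine part of the curve `R_{α,β,γ}`, in the parameters `(u₁,u₂)`. -/
def curveR {K : Type*} [Field K] (α β γ : K) : Set (K × K) :=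
  {q : K × K | ∃ t : K, q = (t, α + β*t + (γ+1)*t^2)}

lemma mem_curveR' {K : Type*} [Field K] {α β γ : K} {u : K × K} :
    u ∈ curveR α β γ ↔ u.2 = α + β*u.1 + (γ+1)*u.1^2 := by
  constructor
  · rintro ⟨t, rfl⟩; simp
  · intro h; exact ⟨u.1, by rw [Prod.ext_iff]; exact ⟨rfl, h⟩⟩

lemma mem_extCircle' {K : Type*} [Field K] {A : K × K} {ρ : K} {u : K × K} :
    u ∈ extCircle A ρ ↔ u = A ∨ (u.1 ≠ A.1 ∧
      u.2 = (1+ρ)*u.1^2 + A.1*(1-2*ρ)*u.1 + A.2 + (ρ-2)*A.1^2) := by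
  unfold extCircle
  simp only [Set.mem_insert_iff, Set.mem_setOf_eq]
  refine or_congr Iff.rfl (and_congr_right fun h => ?_)
  unfold cayleyDist
  rw [div_eq_iff (pow_ne_zero 2 (sub_ne_zero.mpr (Ne.symm h)))]
  constructor <;> intro hh <;> linear_combination hh

theorem stmt_16 {K : Type*} [Field K] (hK : (4 : Cardinal) ≤ Cardinal.mk K)
    (α β γ : K) :
    (1 - 2*γ ≠ 0 →
      curveR α β γ =
        extCircle (β/(1-2*γ), α - (γ-2)*β^2/(1-2*γ)^2) γ) ∧
    (1 - 2*γ = 0 → β ≠ 0 →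
      ¬ ∃ (A : K × K) (ρ : K), curveR α β γ = extCircle A ρ) ∧
    (1 - 2*γ = 0 → β = 0 →
      ∀ A ∈ curveR α β γ, curveR α β γ = extCircle A (2 : K)⁻¹) := by
  refine ⟨?_, ?_, ?_⟩
  · -- case (a)
    intro h
    set a₁ : K := β/(1-2*γ) with ha₁
    set a₂ : K := α - (γ-2)*β^2/(1-2*γ)^2 with ha₂
    have hid : ∀ t : K, α + β*t + (γ+1)*t^2
        = (1+γ)*t^2 + a₁*(1-2*γ)*t + a₂ + (γ-2)*a₁^2 := by
      intro t
      rw [ha₁, ha₂]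
      have h' : (1:K) - γ*2 ≠ 0 := by rwa [mul_comm]
      field_simp
      ring
    ext u
    rw [mem_curveR', mem_extCircle']
    constructor
    · intro hu
      by_cases h1 : u.1 = a₁
      · left
        rw [Prod.ext_iff]
        refine ⟨h1, ?_⟩
        have := hid a₁
        rw [h1] at hu
        rw [this] at hu
        linear_combination hu
      · exact Or.inr ⟨h1, by rw [hu]; exact hid u.1⟩
    · rintro (rfl | ⟨_, hu⟩)
      · show a₂ = α + β*a₁ + (γ+1)*a₁^2
        have h' : (1:K) - γ*2 ≠ 0 := by rwa [mul_comm]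
        rw [ha₁, ha₂]; field_simp; ring
      · rw [hu]; exact (hid u.1).symm
  · -- case (b)
    rintro h1 hβ ⟨⟨a₁, a₂⟩, ρ, hC⟩
    have h2 : (2 : K) ≠ 0 := fun h2 => one_ne_zero (by linear_combination h1 + γ*h2)
    have hA : ((a₁, a₂) : K × K) ∈ curveR α β γ := by
      rw [hC]; exact Set.mem_insert _ _
    have ha₂ : a₂ = α + β*a₁ + (γ+1)*a₁^2 := mem_curveR'.mp hA
    have hall : ∀ t : K, α + β*t + (γ+1)*t^2
        = (1+ρ)*t^2 + a₁*(1-2*ρ)*t + a₂ + (ρ-2)*a₁^2 := by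
      intro t
      by_cases ht : t = a₁
      · subst ht; linear_combination -ha₂
      · have hm : ((t, α + β*t + (γ+1)*t^2) : K × K) ∈ extCircle (a₁, a₂) ρ := by
          rw [← hC]; exact ⟨t, rfl⟩
        rcases mem_extCircle'.mp hm with he | ⟨_, he⟩
        · exact absurd (congrArg Prod.fst he) ht
        · simpa using he
    have E0 := hall 0
    have E1 := hall 1
    have E2 := hall 2
    have h5 : 2*(ρ - γ) = 0 := by linear_combination -E2 + 2*E1 - E0
    have hρ : ρ = γ := sub_eq_zero.mp ((mul_eq_zero.mp h5).resolve_left h2)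
    exact hβ (by linear_combination (E1 - E0) + (1-2*a₁)*hρ + a₁*h1)
  · -- case (c)
    intro h1 hβ A hA
    subst hβ
    have h2 : (2 : K) ≠ 0 := fun h2 => one_ne_zero (by linear_combination h1 + γ*h2)
    have hγ : γ = (2:K)⁻¹ := by field_simp; linear_combination -h1
    obtain ⟨t, rfl⟩ := hA
    have hid : ∀ s : K, α + 0*s + (γ+1)*s^2
        = (1+(2:K)⁻¹)*s^2 + t*(1-2*(2:K)⁻¹)*s + (α + 0*t + (γ+1)*t^2) + ((2:K)⁻¹-2)*t^2 := by
      intro s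
      subst hγ
      field_simp
      ring
    ext u
    rw [mem_curveR', mem_extCircle']
    constructor
    · intro hu
      by_cases hu1 : u.1 = t
      · left
        rw [Prod.ext_iff]
        exact ⟨hu1, by rw [hu, hu1]⟩
      · exact Or.inr ⟨hu1, by rw [hu]; exact hid u.1⟩
    · rintro (rfl | ⟨_, hu⟩)
      · simp
      · rw [hu]; exact (hid u.1).symm
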